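/- Let 0 < p ≤ 1, 0 ≤ r ≤ 1, 0 ≤ q ≤ 1, and set a = pr/3 + (1−p)q. Assume r > 0 or (1−p)q > 0 (so a > 0). Define e_1 = (p(3−r) + 3(1−p)(1−q))/((a+1)p) and e_v = ((v−1)a/(va+1)) e_{v−1} for v > 1, and A = p(3−r) + 3(1−p)(1−q). Then Σ_{v=1}^{∞} (p/A) e_v = 1. -/

import Mathlib

/-!
With `T n = ∏_{k<n} (1 - 1/((k+1)a+1))`, the normalised weights `u_v = (p/A) e_v` satisfy
`u_{n+1} = T n - T (n+1)`: both sides start at `1/(a+1)` and obey the recursion of `e`.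
The series therefore telescopes to `T 0 - lim T = 1`, and `T n → 0` because
`T n ≤ exp (-∑_{k<n} 1/((k+1)a+1))` while that sum dominates a multiple of the harmonic series.
-/

open Filter Finset Topology

theorem Real.prod_one_sub_le_exp_neg_sum {ι : Type*} (s : Finset ι) {f : ι → ℝ}
    (hf : ∀ i ∈ s, f i ≤ 1) : ∏ i ∈ s, (1 - f i) ≤ Real.exp (-∑ i ∈ s, f i) := by
  rw [← sum_neg_distrib, Real.exp_sum]
  exact prod_le_prod (fun i hi => sub_nonneg.2 (hf i hi)) fun i _ => Real.one_sub_le_exp_neg _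

theorem tendsto_prod_range_one_sub_of_tendsto_sum {f : ℕ → ℝ} (hf : ∀ n, f n ≤ 1)
    (hsum : Tendsto (fun n => ∑ i ∈ range n, f i) atTop atTop) :
    Tendsto (fun n => ∏ i ∈ range n, (1 - f i)) atTop (𝓝 0) :=
  squeeze_zero (fun _ => prod_nonneg fun i _ => sub_nonneg.2 (hf i))
    (fun _ => Real.prod_one_sub_le_exp_neg_sum _ fun i _ => hf i)
    (Real.tendsto_exp_atBot.comp (tendsto_neg_atTop_atBot.comp hsum))

theorem hasSum_sub_succ_of_antitone {f : ℕ → ℝ} {l : ℝ} (hf : Antitone f)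
    (hl : Tendsto f atTop (𝓝 l)) : HasSum (fun n => f n - f (n + 1)) (f 0 - l) := by
  rw [hasSum_iff_tendsto_nat_of_nonneg fun n => sub_nonneg.2 (hf n.le_succ)]
  simp_rw [sum_range_sub']
  exact tendsto_const_nhds.sub hl

/-- With `ρ = 1/a`, this is the tail `P(V > n)` of the Yule–Simon distribution. -/
noncomputable def yuleSimonTail (a : ℝ) (n : ℕ) : ℝ :=
  ∏ k ∈ range n, (1 - (((k : ℝ) + 1) * a + 1)⁻¹)

namespace yuleSimonTail

variable {a : ℝ}

@[simp]
theorem zero : yuleSimonTail a 0 = 1 := prod_range_zero _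

theorem succ (n : ℕ) :
    yuleSimonTail a (n + 1) = yuleSimonTail a n * (1 - (((n : ℝ) + 1) * a + 1)⁻¹) :=
  prod_range_succ _ n

theorem sub_succ (n : ℕ) :
    yuleSimonTail a n - yuleSimonTail a (n + 1) = yuleSimonTail a n / (((n : ℝ) + 1) * a + 1) := by
  rw [succ]
  ring

theorem one_le_denom (ha : 0 ≤ a) (n : ℕ) : 1 ≤ ((n : ℝ) + 1) * a + 1 := by
  have : 0 ≤ ((n : ℝ) + 1) * a := by positivity
  linarith

theorem nonneg (ha : 0 ≤ a) (n : ℕ) : 0 ≤ yuleSimonTail a n :=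
  prod_nonneg fun k _ => sub_nonneg.2 (inv_le_one_of_one_le₀ (one_le_denom ha k))

theorem antitone (ha : 0 ≤ a) : Antitone (yuleSimonTail a) :=
  antitone_nat_of_succ_le fun n => by
    rw [← sub_nonneg, sub_succ]
    exact div_nonneg (nonneg ha n) (by linarith [one_le_denom ha n])

theorem tendsto_zero (ha : 0 ≤ a) : Tendsto (yuleSimonTail a) atTop (𝓝 0) := by
  refine tendsto_prod_range_one_sub_of_tendsto_sum
    (fun n => inv_le_one_of_one_le₀ (one_le_denom ha n)) ?_
  have harmonic_le (k : ℕ) : (a + 1)⁻¹ * (1 / ((k : ℝ) + 1)) ≤ (((k : ℝ) + 1) * a + 1)⁻¹ := by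
    rw [← div_eq_inv_mul, div_div, one_div]
    gcongr
    linarith [one_le_denom ha k]
  refine tendsto_atTop_mono (fun n => ?_)
    (Real.tendsto_sum_range_one_div_nat_succ_atTop.const_mul_atTop (by positivity : 0 < (a + 1)⁻¹))
  rw [mul_sum]
  exact sum_le_sum fun k _ => harmonic_le k

theorem hasSum_div (ha : 0 ≤ a) :
    HasSum (fun n : ℕ => yuleSimonTail a n / (((n : ℝ) + 1) * a + 1)) 1 := by
  simpa [sub_succ] using hasSum_sub_succ_of_antitone (antitone ha) (tendsto_zero ha)

theorem eq_div_of_rec (ha : 0 ≤ a) {u : ℕ → ℝ} (h0 : u 0 = (a + 1)⁻¹)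
    (hsucc : ∀ n : ℕ, u (n + 1) = ((n : ℝ) + 1) * a / (((n : ℝ) + 2) * a + 1) * u n) (n : ℕ) :
    u n = yuleSimonTail a n / (((n : ℝ) + 1) * a + 1) := by
  induction n with
  | zero => simp [h0]
  | succ n ih =>
    have hn := (zero_lt_one.trans_le (one_le_denom ha n)).ne'
    have hn' := (zero_lt_one.trans_le (one_le_denom ha (n + 1))).ne'
    push_cast at hn' ⊢
    rw [hsucc, ih, succ]
    field_simp
    ring

end yuleSimonTail

theorem stmt_15_general (p r q : ℝ) (hp0 : 0 < p) (hp1 : p ≤ 1)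
    (hr0 : 0 ≤ r) (hr1 : r ≤ 1) (hq0 : 0 ≤ q) (hq1 : q ≤ 1)
    (a : ℝ) (ha : a = p * r / 3 + (1 - p) * q)
    (e : ℕ → ℝ)
    (he1 : e 1 = (p * (3 - r) + 3 * (1 - p) * (1 - q)) / ((a + 1) * p))
    (hrec : ∀ v : ℕ, 1 < v → e v = (((v : ℝ) - 1) * a / (v * a + 1)) * e (v - 1))
    (A : ℝ) (hA : A = p * (3 - r) + 3 * (1 - p) * (1 - q)) :
    HasSum (fun v : ℕ => (p / A) * e (v + 1)) 1 := by
  have ha0 : 0 ≤ a := ha ▸ add_nonneg (by positivity) (mul_nonneg (by linarith) hq0)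
  have hA0 : 0 < A := hA ▸ add_pos_of_pos_of_nonneg (mul_pos hp0 (by linarith))
    (mul_nonneg (mul_nonneg (by norm_num) (by linarith)) (by linarith))
  have hweights (n : ℕ) := yuleSimonTail.eq_div_of_rec ha0 (u := fun v => p / A * e (v + 1))
    (by rw [he1, ← hA]; field_simp)
    (fun v => by
      rw [hrec (v + 1 + 1) (by omega), Nat.add_sub_cancel]
      push_cast
      ring_nf) n
  simpa only [← hweights] using yuleSimonTail.hasSum_div ha0

theorem stmt_15 (p r q : ℝ) (hp0 : 0 < p) (hp1 : p ≤ 1)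
    (hr0 : 0 ≤ r) (hr1 : r ≤ 1) (hq0 : 0 ≤ q) (hq1 : q ≤ 1)
    (a : ℝ) (ha : a = p * r / 3 + (1 - p) * q)
    (hpos : 0 < r ∨ 0 < (1 - p) * q)
    (e : ℕ → ℝ)
    (he1 : e 1 = (p * (3 - r) + 3 * (1 - p) * (1 - q)) / ((a + 1) * p))
    (hrec : ∀ v : ℕ, 1 < v → e v = (((v : ℝ) - 1) * a / (v * a + 1)) * e (v - 1))
    (A : ℝ) (hA : A = p * (3 - r) + 3 * (1 - p) * (1 - q)) :
    HasSum (fun v : ℕ => (p / A) * e (v + 1)) 1 :=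
  stmt_15_general p r q hp0 hp1 hr0 hr1 hq0 hq1 a ha e he1 hrec A hA
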